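/- Let G be a connected simple graph on n vertices with diameter exactly 2, maximum vertex degree Δ(G), and independence number α(G). Then DLS(G) ≥ Δ(G) + α(G) + 1 − n. -/

import Mathlib

open Finset Matrix Polynomial

/-- The transmission `Tr(v)` of a vertex `v`: the sum of the distances from `v`
to all other vertices of the graph. -/
noncomputable def transm {n : ℕ} (G : SimpleGraph (Fin n)) (v : Fin n) : ℝ :=
  ∑ u : Fin n, (G.dist v u : ℝ)

/-- The distance Laplacian matrix `D^L(G) = Diag(Tr) - D(G)` of a graph `G`. -/
noncomputable def distLap {n : ℕ} (G : SimpleGraph (Fin n)) : Matrix (Fin n) (Fin n) ℝ :=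
  Matrix.diagonal (transm G) - Matrix.of (fun u v : Fin n => (G.dist u v : ℝ))

/-- `IsDLSpec G μ` says that `μ 0 , μ 1 , …, μ (n-1)` are exactly the eigenvalues
(with multiplicity) of the distance Laplacian matrix of `G`; combined with `Antitone μ`
this means `μ ⟨i-1,_⟩ = ∂_i^L(G)` in the usual decreasing ordering. -/
def IsDLSpec {n : ℕ} (G : SimpleGraph (Fin n)) (μ : Fin n → ℝ) : Prop :=
  (distLap G).charpoly = ∏ i : Fin n, (X - C (μ i))

/-- The Wiener index `W(G) = (1/2) ∑_v Tr(v)`. -/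
noncomputable def wiener {n : ℕ} (G : SimpleGraph (Fin n)) : ℝ :=
  (∑ v : Fin n, transm G v) / 2

/-- The maximum transmission `Tr_max(G) = max_v Tr(v)`. -/
noncomputable def trMax {n : ℕ} (G : SimpleGraph (Fin n)) : ℝ :=
  ⨆ v : Fin n, transm G v

/-- The independence number `α(G)`: the maximum size of a set of pairwise
nonadjacent vertices of `G`. -/
noncomputable def indepNum {n : ℕ} (G : SimpleGraph (Fin n)) : ℕ :=
  sSup {k | ∃ s : Finset (Fin n), (∀ u ∈ s, ∀ v ∈ s, ¬ G.Adj u v) ∧ s.card = k}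


/-!
In a graph of diameter two, `d(u,v)` is `1` on edges and `2` on non-edges, so
`D^L(G) = L(G) + 2 L(Gᶜ)`, while `L(G) + L(Gᶜ) = n I - J`. On vectors `x ⊥ 𝟙` the Rayleigh quotient
of `D^L(G)` is therefore `n + R_{Gᶜ}(x) = 2n - R_G(x)`. The star vector of a vertex `v` and a set
`N` of its neighbours in a graph `H` (`|N|` at `v`, `-1` on `N`) is orthogonal to `𝟙` and has
`R_H ≥ |N| + 1`. Centred in a maximum independent set of `G`, i.e. a clique of `Gᶜ`, it gives
`∂₁ ≥ n + α`; centred at a vertex of maximum degree it gives `∂_{n-1} ≤ 2n - Δ - 1`, because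
`D^L(G) 𝟙 = 0` makes `∂_{n-1}`, when positive, a lower bound for the Rayleigh quotient on `𝟙^⊥`.
When `∂_{n-1} ≤ 0` the bound `∂₁ ≥ n + α` suffices on its own, as `Δ < n`.
-/

namespace Matrix.IsHermitian

variable {ι κ : Type*} [Fintype ι] [DecidableEq ι] [Fintype κ] {A : Matrix ι ι ℝ}
  (hA : A.IsHermitian)

noncomputable def eigenCoord (x : ι → ℝ) (i : ι) : ℝ := ⇑(hA.eigenvectorBasis i) ⬝ᵥ x

lemma dotProduct_eq_sum_eigenCoord (x y : ι → ℝ) :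
    x ⬝ᵥ y = ∑ i, hA.eigenCoord x i * hA.eigenCoord y i := by
  have := hA.eigenvectorBasis.sum_inner_mul_inner (WithLp.toLp 2 x) (WithLp.toLp 2 y)
  simp only [EuclideanSpace.inner_eq_star_dotProduct, star_trivial] at this
  rw [dotProduct_comm, ← this]
  exact Finset.sum_congr rfl fun i _ => by rw [eigenCoord, eigenCoord, dotProduct_comm y]

lemma eigenCoord_mulVec (x : ι → ℝ) (i : ι) :
    hA.eigenCoord (A *ᵥ x) i = hA.eigenvalues i * hA.eigenCoord x i := by
  rw [eigenCoord, dotProduct_mulVec, ← mulVec_transpose, ← conjTranspose_eq_transpose_of_trivial,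
    hA.eq, hA.mulVec_eigenvectorBasis, smul_dotProduct, smul_eq_mul, eigenCoord]

lemma dotProduct_mulVec_eq_sum (x : ι → ℝ) :
    x ⬝ᵥ (A *ᵥ x) = ∑ i, hA.eigenvalues i * hA.eigenCoord x i ^ 2 := by
  simp only [hA.dotProduct_eq_sum_eigenCoord x, eigenCoord_mulVec]
  exact Finset.sum_congr rfl fun i _ => by ring

lemma dotProduct_self_eq_sum (x : ι → ℝ) : x ⬝ᵥ x = ∑ i, hA.eigenCoord x i ^ 2 := by
  simp only [hA.dotProduct_eq_sum_eigenCoord x, sq]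

lemma dotProduct_mulVec_le {t : ℝ} (ht : ∀ i, hA.eigenvalues i ≤ t) (x : ι → ℝ) :
    x ⬝ᵥ (A *ᵥ x) ≤ t * (x ⬝ᵥ x) := by
  rw [hA.dotProduct_mulVec_eq_sum, hA.dotProduct_self_eq_sum, Finset.mul_sum]
  exact Finset.sum_le_sum fun i _ => mul_le_mul_of_nonneg_right (ht i) (sq_nonneg _)

lemma le_dotProduct_mulVec_of_mulVec_eq_zero {e : ι → ℝ} (he : e ≠ 0) (hAe : A *ᵥ e = 0)
    {s : ℝ} (hs : 0 < s) {i₀ : ι} (hlow : ∀ i ≠ i₀, s ≤ hA.eigenvalues i) {x : ι → ℝ}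
    (hx : e ⬝ᵥ x = 0) : s * (x ⬝ᵥ x) ≤ x ⬝ᵥ (A *ᵥ x) := by
  -- `e` is orthogonal to every eigenvector whose eigenvalue is at least `s > 0`, so `e ⊥ x`
  -- forces the `i₀`-coordinate of `x` to vanish.
  have he_ne : ∀ i ≠ i₀, hA.eigenCoord e i = 0 := fun i hi => by
    have := hA.eigenCoord_mulVec e i
    rw [hAe] at this
    simpa [eigenCoord, (hs.trans_le (hlow i hi)).ne'] using this.symm
  have he₀ : hA.eigenCoord e i₀ ≠ 0 := fun h => he <| dotProduct_self_eq_zero.mp <| by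
    rw [hA.dotProduct_self_eq_sum]
    exact Finset.sum_eq_zero fun i _ => by
      rcases eq_or_ne i i₀ with rfl | hi
      · simp [h]
      · simp [he_ne i hi]
  have hx₀ : hA.eigenCoord x i₀ = 0 := by
    rw [hA.dotProduct_eq_sum_eigenCoord, Finset.sum_eq_single i₀
      (fun i _ hi => by simp [he_ne i hi]) (by simp)] at hx
    exact (mul_eq_zero.mp hx).resolve_left he₀
  rw [hA.dotProduct_mulVec_eq_sum, hA.dotProduct_self_eq_sum, Finset.mul_sum]
  refine Finset.sum_le_sum fun i _ => ?_
  rcases eq_or_ne i i₀ with rfl | hi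
  · simp [hx₀]
  · exact mul_le_mul_of_nonneg_right (hlow i hi) (sq_nonneg _)

lemma map_eigenvalues_eq_of_charpoly_eq {μ : κ → ℝ} (hμ : A.charpoly = ∏ i, (X - C (μ i))) :
    univ.val.map hA.eigenvalues = univ.val.map μ := by
  have := congrArg roots (hA.charpoly_eq.symm.trans hμ)
  rw [roots_prod _ _ (by simp [prod_ne_zero_iff, X_sub_C_ne_zero]),
    roots_prod _ _ (by simp [prod_ne_zero_iff, X_sub_C_ne_zero])] at this
  simpa using this

section Fin

variable {n : ℕ} {A : Matrix (Fin n) (Fin n) ℝ} (hA : A.IsHermitian) {μ : Fin n → ℝ}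
  (hμ : A.charpoly = ∏ i, (X - C (μ i))) (hmono : Antitone μ)
include hμ hmono

lemma eigenvalues_le_of_charpoly_eq (h0 : 0 < n) (i : Fin n) :
    hA.eigenvalues i ≤ μ ⟨0, h0⟩ := by
  have hi : hA.eigenvalues i ∈ univ.val.map μ := by
    rw [← hA.map_eigenvalues_eq_of_charpoly_eq hμ]
    exact Multiset.mem_map_of_mem _ (mem_univ i)
  obtain ⟨j, -, hj⟩ := Multiset.mem_map.mp hi
  exact hj ▸ hmono (show (⟨0, h0⟩ : Fin n) ≤ j from Nat.zero_le _)

lemma exists_forall_ne_le_eigenvalues_of_charpoly_eq (h2 : 2 ≤ n) :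
    ∃ i₀, ∀ i ≠ i₀, μ ⟨n - 2, by omega⟩ ≤ hA.eigenvalues i := by
  set t := μ ⟨n - 2, by omega⟩
  have hcard : #{i | hA.eigenvalues i < t} = #{j | μ j < t} := by
    have := congrArg (Multiset.countP (· < t)) (hA.map_eigenvalues_eq_of_charpoly_eq hμ)
    rwa [Multiset.countP_map, Multiset.countP_map] at this
  have hlast : ({j | μ j < t} : Finset (Fin n)) ⊆ {⟨n - 1, by omega⟩} := fun j hj => by
    have hj' : ¬j ≤ ⟨n - 2, by omega⟩ := fun hle => (mem_filter.mp hj).2.not_ge (hmono hle)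
    rw [Fin.le_def, not_le] at hj'
    exact mem_singleton.mpr (Fin.ext (by dsimp only at hj' ⊢; omega))
  have : Nonempty (Fin n) := ⟨⟨0, by omega⟩⟩
  obtain ⟨i₀, hi₀⟩ := card_le_one_iff_subset_singleton.mp
    ((hcard.trans_le (card_le_card hlast)).trans_eq (card_singleton _))
  refine ⟨i₀, fun i hi => not_lt.mp fun hlt => hi ?_⟩
  exact mem_singleton.mp (hi₀ (mem_filter.mpr ⟨mem_univ i, hlt⟩))

end Fin

end Matrix.IsHermitian

section StarVector

variable {V : Type*} [DecidableEq V]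

noncomputable def starVector (v : V) (N : Finset V) : V → ℝ :=
  Pi.single v (#N : ℝ) - fun u => if u ∈ N then 1 else 0

variable {v : V} {N : Finset V}

lemma starVector_self (hv : v ∉ N) : starVector v N v = #N := by
  simp [starVector, hv]

lemma starVector_of_mem {u : V} (hu : u ∈ N) (hv : v ∉ N) : starVector v N u = -1 := by
  simp [starVector, hu, ne_of_mem_of_not_mem hu hv]

variable [Fintype V]

lemma sum_starVector : ∑ u, starVector v N u = 0 := by
  simp [starVector, sum_sub_distrib]

lemma starVector_dotProduct_self (hv : v ∉ N) :
    starVector v N ⬝ᵥ starVector v N = #N * (#N + 1) := by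
  have hN : (fun u => if u ∈ N then (1 : ℝ) else 0) ⬝ᵥ (fun u => if u ∈ N then 1 else 0) = #N := by
    simp [dotProduct]
  simp [starVector, dotProduct_sub, sub_dotProduct, hv, hN, mul_add]

end StarVector

namespace SimpleGraph

variable {V : Type*} {G : SimpleGraph V}

lemma dist_eq_two_of_diam_eq_two (hd : G.diam = 2) {u v : V} (huv : u ≠ v) (h : ¬G.Adj u v) :
    G.dist u v = 2 := by
  have hne : G.ediam ≠ ⊤ := ediam_ne_top_of_diam_ne_zero (by omega)
  have hle : G.dist u v ≤ 2 := hd ▸ G.dist_le_diam hne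
  have h0 : G.dist u v ≠ 0 := (preconnected_of_ediam_ne_top hne u v).dist_eq_zero_iff.not.mpr huv
  have h1 : G.dist u v ≠ 1 := dist_eq_one_iff_adj.not.mpr h
  omega

lemma two_le_indepNum_of_diam_eq_two [Finite V] (hd : G.diam = 2) : 2 ≤ G.indepNum := by
  classical
  have : Nonempty V := (nontrivial_of_diam_ne_zero (G := G) (by omega)).to_nonempty
  obtain ⟨a, b, hab⟩ := G.exists_dist_eq_diam
  rw [hd] at hab
  have hne : a ≠ b := by rintro rfl; simp at hab
  have hnadj : ¬G.Adj a b := fun h => by simp [dist_eq_one_iff_adj.mpr h] at hab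
  have hind : G.IsIndepSet ({a, b} : Finset V) := by
    rw [coe_pair, ← isClique_compl, isClique_pair]
    exact fun _ => (compl_adj G a b).mpr ⟨hne, hnadj⟩
  simpa [hne] using hind.card_le_indepNum

variable (G) [Fintype V] [DecidableEq V] [DecidableRel G.Adj]

lemma dotProduct_lapMatrix_add_compl (x : V → ℝ) :
    x ⬝ᵥ (G.lapMatrix ℝ *ᵥ x) + x ⬝ᵥ (Gᶜ.lapMatrix ℝ *ᵥ x)
      = Fintype.card V * (x ⬝ᵥ x) - (∑ i, x i) ^ 2 := by
  rw [← toLinearMap₂'_apply', ← toLinearMap₂'_apply', lapMatrix_toLinearMap₂',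
    lapMatrix_toLinearMap₂', ← add_div, ← sum_add_distrib]
  have hsplit : ∀ i j, ((if G.Adj i j then (x i - x j) ^ 2 else 0) +
      if Gᶜ.Adj i j then (x i - x j) ^ 2 else 0) = (x i - x j) ^ 2 := fun i j => by
    by_cases hij : i = j
    · simp [hij]
    · by_cases h : G.Adj i j <;> simp [h, hij]
  simp only [← sum_add_distrib, hsplit]
  simp only [sub_sq, sum_add_distrib, sum_sub_distrib, ← mul_sum, ← sum_mul, dotProduct, sum_const,
    card_univ, nsmul_eq_mul, ← sq]
  ring

lemma le_dotProduct_lapMatrix_starVector {v : V} {N : Finset V} (hN : N ⊆ G.neighborFinset v) :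
    (#N + 1) * (starVector v N ⬝ᵥ starVector v N)
      ≤ starVector v N ⬝ᵥ (G.lapMatrix ℝ *ᵥ starVector v N) := by
  have hv : v ∉ N := fun h => by simpa using hN h
  set x := starVector v N
  set T : V → V → ℝ := fun i j => if G.Adj i j then (x i - x j) ^ 2 else 0
  have hT : ∀ i j, 0 ≤ T i j := fun i j => by positivity
  have hTv : ∀ w ∈ N, T v w = (#N + 1) ^ 2 ∧ T w v = (#N + 1) ^ 2 := fun w hw => by
    have hadj : G.Adj v w := (mem_neighborFinset G v w).mp (hN hw)
    simp only [T, if_pos hadj, if_pos hadj.symm, x, starVector_self hv, starVector_of_mem hw hv]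
    constructor <;> ring
  -- Only the edges between `v` and `N` are counted, each twice in the double sum.
  have hsum : 2 * (#N * (#N + 1) ^ 2) ≤ ∑ i, ∑ j, T i j :=
    calc 2 * (#N * (#N + 1) ^ 2 : ℝ) = ∑ j ∈ N, T v j + ∑ i ∈ N, T i v := by
          rw [sum_congr rfl fun w hw => (hTv w hw).1, sum_congr rfl fun w hw => (hTv w hw).2,
            sum_const, nsmul_eq_mul]
          ring
      _ ≤ ∑ j, T v j + ∑ i ∈ N, ∑ j, T i j :=
          add_le_add (sum_le_sum_of_subset_of_nonneg (subset_univ N) fun j _ _ => hT v j)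
            (sum_le_sum fun i _ => single_le_sum (fun j _ => hT i j) (mem_univ v))
      _ = ∑ i ∈ insert v N, ∑ j, T i j := (sum_insert hv (f := fun i => ∑ j, T i j)).symm
      _ ≤ ∑ i, ∑ j, T i j :=
          sum_le_sum_of_subset_of_nonneg (subset_univ _) fun i _ _ => sum_nonneg fun j _ => hT i j
  rw [← toLinearMap₂'_apply', lapMatrix_toLinearMap₂', starVector_dotProduct_self hv]
  linarith

end SimpleGraph

section DistLap

variable {n : ℕ} (G : SimpleGraph (Fin n))

lemma indepNum_eq_indepNum : indepNum G = G.indepNum := by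
  unfold indepNum SimpleGraph.indepNum
  congr
  ext k
  constructor
  · rintro ⟨s, hs, rfl⟩
    exact ⟨s, ⟨fun u hu v hv _ => hs u hu v hv, rfl⟩⟩
  · rintro ⟨s, hs, rfl⟩
    refine ⟨s, fun u hu v hv h => ?_, rfl⟩
    exact hs hu hv (G.ne_of_adj h) h

lemma distLap_isHermitian : (distLap G).IsHermitian := by
  ext u v
  by_cases h : u = v
  · subst h; simp [distLap]
  · simp [distLap, h, Ne.symm h, SimpleGraph.dist_comm]

lemma distLap_mulVec_one : distLap G *ᵥ (fun _ => 1) = 0 := by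
  ext u
  simp [distLap, transm, mulVec, dotProduct, diagonal_apply]

lemma two_le_of_diam_eq_two (hd : G.diam = 2) : 2 ≤ n :=
  Fin.nontrivial_iff_two_le.mp (SimpleGraph.nontrivial_of_diam_ne_zero (G := G) (by omega))

variable [DecidableRel G.Adj]

lemma distLap_eq_lapMatrix_add_two_smul_compl (hd : G.diam = 2) :
    distLap G = G.lapMatrix ℝ + 2 • Gᶜ.lapMatrix ℝ := by
  have hdist : ∀ u v, (G.dist u v : ℝ) = G.adjMatrix ℝ u v + 2 * Gᶜ.adjMatrix ℝ u v := by
    intro u v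
    by_cases huv : u = v
    · simp [huv]
    by_cases h : G.Adj u v
    · simp [h, SimpleGraph.dist_eq_one_iff_adj.mpr h]
    · simp [h, huv, SimpleGraph.dist_eq_two_of_diam_eq_two hd huv h]
  have htransm : ∀ u, transm G u = G.degree u + 2 * Gᶜ.degree u := by
    intro u
    simp only [transm, hdist, sum_add_distrib, ← mul_sum, SimpleGraph.adjMatrix_apply,
      ← SimpleGraph.degree_eq_sum_if_adj]
  ext u v
  simp only [distLap, SimpleGraph.lapMatrix, SimpleGraph.degMatrix, Matrix.sub_apply,
    Matrix.add_apply, Matrix.smul_apply, diagonal_apply, of_apply, htransm, hdist]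
  split_ifs <;> ring

lemma dotProduct_distLap_of_sum_eq_zero (hd : G.diam = 2) {x : Fin n → ℝ} (hx : ∑ i, x i = 0) :
    x ⬝ᵥ (distLap G *ᵥ x) = n * (x ⬝ᵥ x) + x ⬝ᵥ (Gᶜ.lapMatrix ℝ *ᵥ x) := by
  have hsplit := G.dotProduct_lapMatrix_add_compl x
  rw [hx, Fintype.card_fin] at hsplit
  rw [distLap_eq_lapMatrix_add_two_smul_compl G hd, add_mulVec, smul_mulVec, dotProduct_add,
    dotProduct_smul, two_smul]
  linarith

end DistLap

namespace IsDLSpec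

variable {n : ℕ} {G : SimpleGraph (Fin n)} {μ : Fin n → ℝ}

lemma add_indepNum_le (hμ : IsDLSpec G μ) (hmono : Antitone μ) (hd : G.diam = 2) :
    (n : ℝ) + indepNum G ≤ μ ⟨0, by have := two_le_of_diam_eq_two G hd; omega⟩ := by
  classical
  obtain ⟨s, hs, hcard⟩ := G.exists_isNIndepSet_indepNum
  have hα := SimpleGraph.two_le_indepNum_of_diam_eq_two hd
  obtain ⟨v, hv⟩ : s.Nonempty := card_pos.mp (by omega)
  have hclique : Gᶜ.IsClique (s : Set (Fin n)) := by simpa using hs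
  have hN : s.erase v ⊆ Gᶜ.neighborFinset v := fun u hu =>
    (Gᶜ.mem_neighborFinset v u).mpr (hclique hv (mem_of_mem_erase hu) (ne_of_mem_erase hu).symm)
  have hNα : (#(s.erase v) : ℝ) + 1 = indepNum G := by
    rw [indepNum_eq_indepNum, ← hcard, card_erase_of_mem hv, Nat.cast_sub (card_pos.mpr ⟨v, hv⟩)]
    ring
  have hA := distLap_isHermitian G
  have hray := hA.dotProduct_mulVec_le
    (hA.eigenvalues_le_of_charpoly_eq hμ hmono (zero_lt_two.trans_le (two_le_of_diam_eq_two G hd)))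
    (starVector v (s.erase v))
  have hquad := dotProduct_distLap_of_sum_eq_zero G hd (sum_starVector (v := v) (N := s.erase v))
  have hstar := Gᶜ.le_dotProduct_lapMatrix_starVector hN
  have hy : 0 < starVector v (s.erase v) ⬝ᵥ starVector v (s.erase v) := by
    rw [starVector_dotProduct_self (notMem_erase v s), card_erase_of_mem hv]
    have : 0 < #s - 1 := by omega
    positivity
  rw [← hNα]
  exact le_of_mul_le_mul_right (by linarith) hy

lemma le_two_mul_sub_maxDegree [DecidableRel G.Adj] (hμ : IsDLSpec G μ) (hmono : Antitone μ)
    (hd : G.diam = 2) (hpos : 0 < μ ⟨n - 2, by have := two_le_of_diam_eq_two G hd; omega⟩) :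
    μ ⟨n - 2, by have := two_le_of_diam_eq_two G hd; omega⟩ ≤ 2 * n - (G.maxDegree + 1) := by
  have h2 := two_le_of_diam_eq_two G hd
  have : Nontrivial (Fin n) := Fin.nontrivial_iff_two_le.mpr h2
  obtain ⟨v, hv⟩ := G.exists_maximal_degree_vertex
  have hconn : G.Preconnected := SimpleGraph.preconnected_of_ediam_ne_top
    (SimpleGraph.ediam_ne_top_of_diam_ne_zero (by omega))
  have hNΔ : #(G.neighborFinset v) = G.maxDegree := by rw [G.card_neighborFinset_eq_degree, hv]
  have hA := distLap_isHermitian G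
  obtain ⟨i₀, hi₀⟩ := hA.exists_forall_ne_le_eigenvalues_of_charpoly_eq hμ hmono h2
  have hray := hA.le_dotProduct_mulVec_of_mulVec_eq_zero (e := fun _ => 1)
    (fun h => one_ne_zero (congrFun h v)) (distLap_mulVec_one G) hpos hi₀
    (x := starVector v (G.neighborFinset v)) (by simp [dotProduct, sum_starVector])
  have hquad := dotProduct_distLap_of_sum_eq_zero G hd
    (sum_starVector (v := v) (N := G.neighborFinset v))
  have hsplit := G.dotProduct_lapMatrix_add_compl (starVector v (G.neighborFinset v))
  rw [sum_starVector, Fintype.card_fin] at hsplit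
  have hstar := G.le_dotProduct_lapMatrix_starVector (subset_refl (G.neighborFinset v))
  have hx : 0 < starVector v (G.neighborFinset v) ⬝ᵥ starVector v (G.neighborFinset v) := by
    rw [starVector_dotProduct_self (G.notMem_neighborFinset_self v), hNΔ]
    have : 0 < G.maxDegree := hv ▸ hconn.degree_pos_of_nontrivial v
    positivity
  rw [← hNΔ]
  exact le_of_mul_le_mul_right (by linarith) hx

end IsDLSpec

theorem dls_lower_maxDegree_indepNum (n : ℕ) (G : SimpleGraph (Fin n))
    [DecidableRel G.Adj] (hG : G.Connected) (hd : G.diam = 2)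
    (μ : Fin n → ℝ) (hμ : IsDLSpec G μ) (hmono : Antitone μ) :
    (G.maxDegree : ℝ) + (indepNum G : ℝ) + 1 - n ≤ μ ⟨0, by have h0 : 0 < n := Fin.pos_iff_nonempty.mpr hG.nonempty; omega⟩ - μ ⟨n - 2, by have h0 : 0 < n := Fin.pos_iff_nonempty.mpr hG.nonempty; omega⟩ := by
  have h2 := two_le_of_diam_eq_two G hd
  have : Nonempty (Fin n) := ⟨⟨0, by omega⟩⟩
  have hα := hμ.add_indepNum_le hmono hd
  have hΔ : (G.maxDegree : ℝ) + 1 ≤ n := by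
    exact_mod_cast Fintype.card_fin n ▸ G.maxDegree_lt_card_verts
  rcases le_or_gt (μ ⟨n - 2, by omega⟩) 0 with hle | hpos
  · linarith
  · linarith [hμ.le_two_mul_sub_maxDegree hmono hd hpos]
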